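/- Terminal coalgebras of strictly indexed endofunctors: let (Ē, e) be a strictly indexed endofunctor on L : C^op → Cat with corresponding split fibration endofunctor E on Σ_C L. Assume (1) L respects terminal coalgebras (each reindexing functor L(f) strictly preserves terminal coalgebras), (2) the terminal Ē-coalgebra (νĒ, coind_{Ē}) exists in C, and (3) the endofunctor ě := L(coind_{Ē}) ∘ e_{νĒ} on L(νĒ) has a terminal coalgebra (νě, coind_{ě}). Then E has terminal coalgebra νE = (νĒ, νě) with structure map (coind_{Ē}, coind_{ě}). -/

import Mathlib

universe w₂ w₁ v u

open CategoryTheory CategoryTheory.Limits Opposite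

namespace CHAD

variable {C : Type u} [Category.{v} C]

/-- The total category (Grothendieck construction) `Σ_C L` of a strictly indexed category
`L : Cᵒᵖ ⥤ Cat`. -/
structure Total (L : Cᵒᵖ ⥤ Cat.{w₂, w₁}) where
  base : C
  fib : L.obj (op base)

namespace Total

variable {L : Cᵒᵖ ⥤ Cat.{w₂, w₁}}

/-- A morphism `(W, w) ⟶ (X, x)` in `Σ_C L` is a pair `(f : W ⟶ X, f̄ : w ⟶ L(f)(x))`. -/
structure Hom (X Y : Total L) where
  base : X.base ⟶ Y.base
  fib : X.fib ⟶ (L.map base.op).toFunctor.obj Y.fib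

theorem Hom.ext' {X Y : Total L} (f g : Hom X Y) (w_base : f.base = g.base)
    (w_fib : f.fib ≫ eqToHom (by rw [w_base]) = g.fib) : f = g := by
  cases f; cases g
  dsimp at w_base
  subst w_base
  simpa using w_fib

/-- Identity morphism. -/
def id (X : Total L) : Hom X X where
  base := 𝟙 X.base
  fib := eqToHom (by simp)

/-- Composition of morphisms. -/
def comp {X Y Z : Total L} (f : Hom X Y) (g : Hom Y Z) : Hom X Z where
  base := f.base ≫ g.base
  fib := f.fib ≫ (L.map f.base.op).toFunctor.map g.fib ≫ eqToHom (by rw [op_comp, Functor.map_comp]; rfl)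

attribute [local simp] eqToHom_map

instance : Category (Total L) where
  Hom X Y := Total.Hom X Y
  id X := Total.id X
  comp f g := Total.comp f g
  id_comp f := by
    refine Hom.ext' _ _ (by simp [comp, id]) ?_
    simp only [comp, id]
    simp
    erw [Functor.congr_hom (congrArg Cat.Hom.toFunctor (L.map_id (op _))) f.fib]
    simp
    erw [eqToHom_trans, eqToHom_refl, Category.comp_id]
  comp_id f := by
    refine Hom.ext' _ _ (by simp [comp, id]) ?_
    simp only [comp, id]
    simp
    erw [eqToHom_trans, eqToHom_refl, Category.comp_id]
  assoc f g h := by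
    refine Hom.ext' _ _ (by simp [comp, id]) ?_
    simp only [comp]
    simp [Functor.congr_hom (congrArg Cat.Hom.toFunctor (L.map_comp g.base.op f.base.op)) h.fib]
    erw [eqToHom_trans]

@[simp] theorem id_base (X : Total L) : (𝟙 X : X ⟶ X).base = 𝟙 X.base := rfl

@[simp] theorem id_fib (X : Total L) :
    (𝟙 X : X ⟶ X).fib = eqToHom (by simp) := rfl

@[simp] theorem comp_base {X Y Z : Total L} (f : X ⟶ Y) (g : Y ⟶ Z) :
    (f ≫ g).base = f.base ≫ g.base := rfl

@[simp] theorem comp_fib {X Y Z : Total L} (f : X ⟶ Y) (g : Y ⟶ Z) :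
    (f ≫ g).fib = f.fib ≫ (L.map f.base.op).toFunctor.map g.fib ≫
      eqToHom (show (L.map f.base.op).toFunctor.obj ((L.map g.base.op).toFunctor.obj Z.fib) =
          (L.map (f.base ≫ g.base).op).toFunctor.obj Z.fib by
        rw [op_comp, Functor.map_comp]; rfl) := rfl

variable (L)

/-- The projection functor `Σ_C L ⥤ C`. -/
def proj : Total L ⥤ C where
  obj X := X.base
  map f := f.base
  map_id _ := rfl
  map_comp _ _ := rfl

end Total

end CHAD

namespace CHAD

open CategoryTheory CategoryTheory.Limits Opposite

variable {C : Type u} [Category.{v} C] (L : Cᵒᵖ ⥤ Cat.{w₂, w₁})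
variable (Ebar : C ⥤ C) (e : L ⟶ Ebar.op ⋙ L)

/-- The split fibration endofunctor on `Σ_C L` corresponding to a strictly indexed
endofunctor `(Ē, e)` on `L`. -/
def totalLift : Total L ⥤ Total L where
  obj X := ⟨Ebar.obj X.base, (e.app (op X.base)).toFunctor.obj X.fib⟩
  map {X Y} f := ⟨Ebar.map f.base,
    (e.app (op X.base)).toFunctor.map f.fib ≫
      eqToHom (Functor.congr_obj (congrArg Cat.Hom.toFunctor (e.naturality f.base.op)) Y.fib)⟩
  map_id X := by
    refine Total.Hom.ext' _ _ (by simp) ?_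
    simp [eqToHom_map]
    erw [eqToHom_map (e.app (op X.base)).toFunctor]
    erw [eqToHom_trans, eqToHom_trans]
  map_comp {X Y Z} f g := by
    refine Total.Hom.ext' _ _ (by simp) ?_
    dsimp
    simp only [Total.comp_fib, Functor.map_comp, eqToHom_map, Category.assoc]
    rw [show (e.app (op X.base)).toFunctor.map ((L.map f.base.op).toFunctor.map g.fib) =
      (L.map f.base.op ≫ e.app (op X.base)).toFunctor.map g.fib from rfl]
    rw [Functor.congr_hom (congrArg Cat.Hom.toFunctor (e.naturality f.base.op)) g.fib]
    simp [eqToHom_map]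
    erw [eqToHom_trans, eqToHom_trans]

end CHAD

/-!
Terminal coalgebras of strictly indexed endofunctors: let `(Ē, e)` be a strictly indexed
endofunctor on `L : Cᵒᵖ ⥤ Cat` with corresponding split fibration endofunctor `E` on
`Σ_C L`.  Assume (1) `L` respects terminal coalgebras (each reindexing functor `L(f)`
preserves terminal coalgebras), (2) the terminal `Ē`-coalgebra `(νĒ, coind_Ē)` exists in
`C`, and (3) the endofunctor `ě := L(coind_Ē) ∘ e_{νĒ}` on `L(νĒ)` has a terminal coalgebra
`(νě, coind_ě)`.  Then `E` has terminal coalgebra `νE = (νĒ, νě)` with structure map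
`(coind_Ē, coind_ě)`.
-/

namespace CHAD

open CategoryTheory CategoryTheory.Limits Opposite

/-- A functor `G` preserves terminal coalgebras if, for every pair of endofunctors
intertwined with `G` by a natural isomorphism, the induced functor on coalgebra categories
sends terminal coalgebras to terminal coalgebras. -/
def PreservesTerminalCoalgebras {A : Type*} [Category A] {B : Type*} [Category B]
    (G : A ⥤ B) : Prop :=
  ∀ (E₁ : A ⥤ A) (E₂ : B ⥤ B) (β : E₁ ⋙ G ≅ G ⋙ E₂)
    (V : CategoryTheory.Endofunctor.Coalgebra E₁), IsTerminal V →
      Nonempty (IsTerminal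
        (⟨G.obj V.V, G.map V.str ≫ β.hom.app V.V⟩ : CategoryTheory.Endofunctor.Coalgebra E₂))

variable {C : Type u} [Category.{v} C] (L : Cᵒᵖ ⥤ Cat.{w₂, w₁})
variable (Ebar : C ⥤ C) (e : L ⟶ Ebar.op ⋙ L)

/-- The endofunctor `ě := L(coind_Ē) ∘ e_{νĒ}` on the fibre `L(νĒ)`. -/
def fibreCoalgEndo (ν1 : CategoryTheory.Endofunctor.Coalgebra Ebar) :
    (L.obj (op ν1.V)) ⥤ (L.obj (op ν1.V)) :=
  (e.app (op ν1.V) ≫ L.map ν1.str.op).toFunctor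

/-- The coalgebra `(νE, coind_E) = ((νĒ, νě), (coind_Ē, coind_ě))` for the split fibration
endofunctor `E` on `Σ_C L`. -/
def totalCoalgebra (ν1 : CategoryTheory.Endofunctor.Coalgebra Ebar)
    (ν2 : CategoryTheory.Endofunctor.Coalgebra (fibreCoalgEndo L Ebar e ν1)) :
    CategoryTheory.Endofunctor.Coalgebra (totalLift L Ebar e) :=
  ⟨⟨ν1.V, ν2.V⟩, ⟨ν1.str, ν2.str⟩⟩

/-!
An `E`-coalgebra `((Y, y), (ξ, ξ'))` is an `Ē`-coalgebra `(Y, ξ)` together with a coalgebra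
`(y, ξ')` of the fibre endofunctor `L(ξ) ∘ e_Y` on `L(Y)`. Let `g : (Y, ξ) ⟶ νĒ` be the unique
coalgebra map. Naturality of `e` and the equation `ξ ≫ Ē g = g ≫ coind_Ē` say that `L(g)`
intertwines `ě` with `L(ξ) ∘ e_Y`, so by (1) `L(g)(νě)` is a terminal `L(ξ) ∘ e_Y`-coalgebra.
A morphism of `E`-coalgebras into `(νĒ, νě)` is a base coalgebra map, hence `g`, together with a
coalgebra map `(y, ξ') ⟶ L(g)(νě)`, which is therefore unique as well.
-/

theorem _root_.CategoryTheory.Functor.comp_map_comp_eqToHom_eq_iff {A B : Type*} [Category A]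
    [Category B] (Φ : A ⥤ B) {a b c z w : B} {x y y' : A} (f : a ⟶ Φ.obj x) (m : x ⟶ y)
    (g : a ⟶ b) (h : b ⟶ c) (p : y = y') (q : Φ.obj y' = z) (t : z = w) (r : c = w)
    (r' : c = Φ.obj y) :
    (f ≫ Φ.map (m ≫ eqToHom p) ≫ eqToHom q) ≫ eqToHom t = g ≫ h ≫ eqToHom r ↔
      f ≫ Φ.map m = g ≫ h ≫ eqToHom r' := by
  subst p q t
  simp

section

variable {L Ebar e}

open CategoryTheory.Endofunctor

def baseCoalgebra (W : Coalgebra (totalLift L Ebar e)) : Coalgebra Ebar :=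
  ⟨W.V.base, W.str.base⟩

def fibreCoalgebra (W : Coalgebra (totalLift L Ebar e)) :
    Coalgebra (fibreCoalgEndo L Ebar e (baseCoalgebra W)) :=
  ⟨W.V.fib, W.str.fib⟩

theorem fibreCoalgEndo_comp_reindex {V V' : Coalgebra Ebar} (g : V ⟶ V') :
    fibreCoalgEndo L Ebar e V' ⋙ (L.map g.f.op).toFunctor =
      (L.map g.f.op).toFunctor ⋙ fibreCoalgEndo L Ebar e V := by
  have h : (e.app (op V'.V) ≫ L.map V'.str.op) ≫ L.map g.f.op =
      L.map g.f.op ≫ e.app (op V.V) ≫ L.map V.str.op := by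
    have nat : e.app (op V'.V) ≫ L.map (Ebar.map g.f).op = L.map g.f.op ≫ e.app (op V.V) :=
      (e.naturality g.f.op).symm
    rw [Category.assoc, ← L.map_comp, ← op_comp, ← g.h, op_comp, L.map_comp, ← Category.assoc,
      nat, Category.assoc]
  exact congrArg Cat.Hom.toFunctor h

def reindexCoalgebra {V V' : Coalgebra Ebar} (g : V ⟶ V')
    (N : Coalgebra (fibreCoalgEndo L Ebar e V')) : Coalgebra (fibreCoalgEndo L Ebar e V) :=
  ⟨(L.map g.f.op).toFunctor.obj N.V,
    (L.map g.f.op).toFunctor.map N.str ≫ (eqToIso (fibreCoalgEndo_comp_reindex g)).hom.app N.V⟩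

theorem reindexCoalgebra_str {V V' : Coalgebra Ebar} (g : V ⟶ V')
    (N : Coalgebra (fibreCoalgEndo L Ebar e V')) :
    (reindexCoalgebra g N).str = (L.map g.f.op).toFunctor.map N.str ≫
      eqToHom (Functor.congr_obj (fibreCoalgEndo_comp_reindex g) N.V) := by
  simp [reindexCoalgebra, eqToHom_app]

theorem Total.Hom.ext_iff' {X Y : Total L} (f g : Total.Hom X Y) :
    f = g ↔ ∃ w : f.base = g.base, f.fib ≫ eqToHom (by rw [w]) = g.fib := by
  refine ⟨?_, fun ⟨w, h⟩ => Total.Hom.ext' f g w h⟩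
  rintro rfl
  exact ⟨rfl, by simp⟩

theorem totalCoalgebra_hom_condition_iff (W : Coalgebra (totalLift L Ebar e)) {V : Coalgebra Ebar}
    (N : Coalgebra (fibreCoalgEndo L Ebar e V)) (g : baseCoalgebra W ⟶ V)
    (u : W.V.fib ⟶ (L.map g.f.op).toFunctor.obj N.V) :
    W.str ≫ (totalLift L Ebar e).map (⟨g.f, u⟩ : Total.Hom W.V (totalCoalgebra L Ebar e V N).V) =
        (⟨g.f, u⟩ : Total.Hom W.V (totalCoalgebra L Ebar e V N).V) ≫
          (totalCoalgebra L Ebar e V N).str ↔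
      (fibreCoalgebra W).str ≫ (fibreCoalgEndo L Ebar e (baseCoalgebra W)).map u =
        u ≫ (reindexCoalgebra g N).str := by
  rw [Total.Hom.ext_iff', reindexCoalgebra_str]
  constructor
  · rintro ⟨_, h⟩
    exact (Functor.comp_map_comp_eqToHom_eq_iff (L.map W.str.base.op).toFunctor W.str.fib
      ((e.app (op W.V.base)).toFunctor.map u) u ((L.map g.f.op).toFunctor.map N.str) _ _ _ _ _).1 h
  · intro h
    exact ⟨g.h, (Functor.comp_map_comp_eqToHom_eq_iff (L.map W.str.base.op).toFunctor W.str.fib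
      ((e.app (op W.V.base)).toFunctor.map u) u ((L.map g.f.op).toFunctor.map N.str) _ _ _ _ _).2 h⟩

def baseHom {W : Coalgebra (totalLift L Ebar e)} {V : Coalgebra Ebar}
    {N : Coalgebra (fibreCoalgEndo L Ebar e V)} (φ : W ⟶ totalCoalgebra L Ebar e V N) :
    baseCoalgebra W ⟶ V :=
  ⟨φ.f.base, congrArg Total.Hom.base φ.h⟩

def totalHom (W : Coalgebra (totalLift L Ebar e)) {V : Coalgebra Ebar}
    {N : Coalgebra (fibreCoalgEndo L Ebar e V)} (g : baseCoalgebra W ⟶ V)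
    (k : fibreCoalgebra W ⟶ reindexCoalgebra g N) : W ⟶ totalCoalgebra L Ebar e V N :=
  ⟨⟨g.f, k.f⟩, (totalCoalgebra_hom_condition_iff W N g k.f).2 k.h⟩

theorem eq_totalHom {W : Coalgebra (totalLift L Ebar e)} {V : Coalgebra Ebar}
    {N : Coalgebra (fibreCoalgEndo L Ebar e V)} (φ : W ⟶ totalCoalgebra L Ebar e V N)
    (hV : IsTerminal V) (hN : IsTerminal (reindexCoalgebra (hV.from (baseCoalgebra W)) N)) :
    φ = totalHom W (hV.from _) (hN.from _) := by
  have hbase : φ.f.base = (hV.from (baseCoalgebra W)).f :=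
    congrArg Coalgebra.Hom.f (hV.hom_ext (baseHom φ) _)
  obtain ⟨⟨b, u⟩, hφ⟩ := φ
  dsimp only at hbase
  subst hbase
  let k : fibreCoalgebra W ⟶ reindexCoalgebra (hV.from (baseCoalgebra W)) N :=
    ⟨u, (totalCoalgebra_hom_condition_iff W N (hV.from _) u).1 hφ⟩
  have hu : u = (hN.from (fibreCoalgebra W)).f := congrArg Coalgebra.Hom.f (hN.hom_ext k _)
  subst hu
  rfl

def isTerminalTotalCoalgebra {V : Coalgebra Ebar} {N : Coalgebra (fibreCoalgEndo L Ebar e V)}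
    (hV : IsTerminal V)
    (hN : ∀ W : Coalgebra (totalLift L Ebar e),
      IsTerminal (reindexCoalgebra (hV.from (baseCoalgebra W)) N)) :
    IsTerminal (totalCoalgebra L Ebar e V N) :=
  IsTerminal.ofUniqueHom (fun W => totalHom W (hV.from _) ((hN W).from _))
    fun W φ => eq_totalHom φ hV (hN W)

end

theorem terminal_coalgebra_of_strictly_indexed_endofunctor
    (hres : ∀ {X Y : Cᵒᵖ} (f : X ⟶ Y),
      PreservesTerminalCoalgebras ((L.map f).toFunctor : L.obj X ⥤ L.obj Y))
    (ν1 : CategoryTheory.Endofunctor.Coalgebra Ebar) (h1 : IsTerminal ν1)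
    (ν2 : CategoryTheory.Endofunctor.Coalgebra (fibreCoalgEndo L Ebar e ν1))
    (h2 : IsTerminal ν2) :
    Nonempty (IsTerminal (totalCoalgebra L Ebar e ν1 ν2)) :=
  ⟨isTerminalTotalCoalgebra h1 fun _ => (hres _ _ _ _ ν2 h2).some⟩

end CHAD
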